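/- arXiv:2408.10912 — 2 statements merged into one kernel-verified Lean document; each statement's English description precedes it below -/
import Mathlib

section
/- Random coloring union bound: let D be a finite set and let N functions F_1,…,F_N : D → {1,…,M} be chosen with all values i.i.d. uniform. If N ≤ 2^{|D|(λ log₂ M − 1)} and λ > 1/M, then with positive probability, for every pair i ≠ j the collision fraction |{y : F_i(y) = F_j(y)}|/|D| is at most λ. Consequently N can be taken doubly exponential in log|D|. -/
/-!
Colorings that agree with a fixed `f` on more than `λ|D|` points are determined by their
agreement set (at most `2^|D|` choices) together with their values off it (at most
`M^((1-λ)|D|)` choices), so each such "ball" around `f` is small. The bound on `N` says exactly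
that `N` balls cannot cover all `M^|D|` colorings, so colorings lying pairwise outside each
other's balls can be chosen greedily.
-/

open Finset

theorem exists_fin_pairwise_not_rel_of_mul_le {α : Type*} [Fintype α] [Nonempty α]
    {R : α → α → Prop} [DecidableRel R] [Std.Symm R] {b : ℕ} (hb : ∀ a, #{x | R a x} ≤ b) :
    ∀ {N : ℕ}, N * b ≤ Fintype.card α → ∃ F : Fin N → α, Pairwise fun i j => ¬R (F i) (F j)
  | 0, _ => ⟨Fin.elim0, fun i => i.elim0⟩
  | N + 1, hN => by
    classical
    obtain ⟨F, hF⟩ := exists_fin_pairwise_not_rel_of_mul_le hb (N := N) (by nlinarith)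
    set near := univ.biUnion fun i => ({x | R (F i) x} : Finset α)
    have hnear : #near < Fintype.card α := by
      have : #near ≤ N * b := by
        simpa using card_biUnion_le_card_mul univ _ b fun i _ => hb (F i)
      rcases b.eq_zero_or_pos with rfl | hb0
      · simpa using this.trans_lt Fintype.card_pos
      · nlinarith
    obtain ⟨x, -, hx⟩ := exists_mem_notMem_of_card_lt_card (s := near) (t := univ)
      (by simpa using hnear)
    have hfar (i : Fin N) : ¬R (F i) x := fun h => hx (mem_biUnion.2 ⟨i, mem_univ _, by simpa⟩)
    refine ⟨Fin.cons x F, pairwise_fin_succ_iff.2 ⟨fun i => ?_, fun i => ?_, hF⟩⟩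
    · simpa using hfar i
    · simpa using fun h => hfar i (Std.Symm.symm _ _ h)

section Colorings

variable {D C : Type*} [Fintype D] [DecidableEq D] [Fintype C] [DecidableEq C]

theorem card_filter_eqOn_eq_pow (f : D → C) (S : Finset D) :
    #{g : D → C | ∀ y ∈ S, g y = f y} = Fintype.card C ^ (Fintype.card D - #S) := by
  have : ({g : D → C | ∀ y ∈ S, g y = f y} : Finset _) =
      Fintype.piFinset fun y => if y ∈ S then {f y} else univ := by
    ext g
    simp only [mem_filter, mem_univ, true_and, Fintype.mem_piFinset]
    refine forall_congr' fun y => ?_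
    split_ifs <;> simp [*]
  rw [this, Fintype.card_piFinset]
  simp only [apply_ite card, card_singleton, card_univ, prod_ite, prod_const_one, one_mul,
    prod_const]
  simp [filter_not, ← compl_eq_univ_sdiff, card_compl]

theorem card_large_agreement_le [Nonempty C] (f : D → C) (lam : ℝ) :
    (#{g : D → C | lam * Fintype.card D < #{y | f y = g y}} : ℝ) ≤
      2 ^ Fintype.card D * (Fintype.card C : ℝ) ^ ((1 - lam) * Fintype.card D) := by
  set n := Fintype.card D
  set large := (univ : Finset (Finset D)).filter fun S => lam * n < #S
  have hcover : ({g : D → C | lam * n < #{y | f y = g y}} : Finset _) ⊆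
      large.biUnion fun S => {g | ∀ y ∈ S, g y = f y} := by
    intro g hg
    rw [mem_filter] at hg
    exact mem_biUnion.2 ⟨_, mem_filter.2 ⟨mem_univ _, hg.2⟩, by simp [eq_comm]⟩
  have hfiber : ∀ S ∈ large,
      (#{g : D → C | ∀ y ∈ S, g y = f y} : ℝ) ≤ (Fintype.card C : ℝ) ^ ((1 - lam) * n) := by
    intro S hS
    rw [card_filter_eqOn_eq_pow, Nat.cast_pow, ← Real.rpow_natCast, Nat.cast_sub (card_le_univ S)]
    exact Real.rpow_le_rpow_of_exponent_le (by exact_mod_cast Fintype.card_pos)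
      (by linarith [(mem_filter.1 hS).2])
  calc (#{g : D → C | lam * n < #{y | f y = g y}} : ℝ)
      ≤ ∑ S ∈ large, (#{g : D → C | ∀ y ∈ S, g y = f y} : ℝ) := by
        exact_mod_cast (card_le_card hcover).trans card_biUnion_le
    _ ≤ #large * (Fintype.card C : ℝ) ^ ((1 - lam) * n) := by
        simpa using sum_le_sum hfiber
    _ ≤ 2 ^ n * (Fintype.card C : ℝ) ^ ((1 - lam) * n) := by
        gcongr
        exact_mod_cast (card_filter_le _ _).trans (by simp [n])

end Colorings

theorem mul_two_pow_mul_rpow_le_pow {M N lam : ℝ} {n : ℕ} (hM : 0 < M)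
    (hN : N ≤ 2 ^ ((n : ℝ) * (lam * Real.logb 2 M - 1))) :
    N * (2 ^ n * M ^ ((1 - lam) * n)) ≤ M ^ n := by
  have hpow : (2 : ℝ) ^ ((n : ℝ) * (lam * Real.logb 2 M - 1)) = M ^ (lam * n) / 2 ^ n := by
    rw [show (n : ℝ) * (lam * Real.logb 2 M - 1) = Real.logb 2 M * (lam * n) - n by ring,
      Real.rpow_sub two_pos, Real.rpow_mul zero_le_two, Real.rpow_logb two_pos (by norm_num) hM,
      Real.rpow_natCast]
  calc N * (2 ^ n * M ^ ((1 - lam) * n))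
      ≤ M ^ (lam * n) / 2 ^ n * (2 ^ n * M ^ ((1 - lam) * n)) := by
        gcongr
        exact hpow ▸ hN
    _ = M ^ (lam * n) * M ^ ((1 - lam) * n) := by field_simp
    _ = M ^ n := by rw [← Real.rpow_add hM, ← Real.rpow_natCast]; ring_nf

theorem random_coloring_union_bound_general
    {D : Type*} [Fintype D]
    (M N : ℕ) (hM : 2 ≤ M)
    (lam : ℝ) (hlam1 : 1 / (M : ℝ) < lam)
    (hNbound : (N : ℝ) ≤ (2 : ℝ) ^ ((Fintype.card D : ℝ) * (lam * Real.logb 2 (M : ℝ) - 1))) :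
    ∃ F : Fin N → D → Fin M, ∀ i j : Fin N, i ≠ j →
      ((Finset.univ.filter (fun y : D => F i y = F j y)).card : ℝ)
        / (Fintype.card D : ℝ) ≤ lam := by
  classical
  set n := Fintype.card D
  have : NeZero M := ⟨by omega⟩
  have : Std.Symm fun f g : D → Fin M => lam * n < #{y | f y = g y} :=
    ⟨fun f g h => by simpa only [eq_comm] using h⟩
  set ball := (2 : ℝ) ^ n * (M : ℝ) ^ ((1 - lam) * n)
  have hball (f : D → Fin M) : #{g : D → Fin M | lam * n < #{y | f y = g y}} ≤ ⌊ball⌋₊ :=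
    Nat.le_floor (by simpa using card_large_agreement_le f lam)
  have hN : N * ⌊ball⌋₊ ≤ Fintype.card (D → Fin M) := by
    rw [Fintype.card_fun, Fintype.card_fin]
    exact_mod_cast calc (N : ℝ) * ⌊ball⌋₊
        ≤ N * ball := by gcongr; exact Nat.floor_le (by positivity)
      _ ≤ M ^ n := mul_two_pow_mul_rpow_le_pow (by positivity) hNbound
  obtain ⟨F, hF⟩ := exists_fin_pairwise_not_rel_of_mul_le hball hN
  have hlam : 0 ≤ lam := (by positivity : (0 : ℝ) ≤ 1 / M).trans hlam1.le
  exact ⟨F, fun i j hij => div_le_of_le_mul₀ n.cast_nonneg hlam (not_lt.1 (hF hij))⟩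

/-- Random coloring union bound: if N ≤ 2^{|D|(λ log₂ M - 1)}, then there exist
N colorings D → {1,…,M} all of whose pairwise collision fractions are at most λ
(i.e., with positive probability random colorings have this property). -/
theorem random_coloring_union_bound
    {D : Type*} [Fintype D] [Nonempty D] [DecidableEq D]
    (M N : ℕ) (hM : 2 ≤ M) (hN : 2 ≤ N)
    (lam : ℝ) (hlam1 : 1 / (M : ℝ) < lam) (hlam2 : lam < 1)
    (hNbound : (N : ℝ) ≤ (2 : ℝ) ^ ((Fintype.card D : ℝ) * (lam * Real.logb 2 (M : ℝ) - 1))) :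
    ∃ F : Fin N → D → Fin M, ∀ i j : Fin N, i ≠ j →
      ((Finset.univ.filter (fun y : D => F i y = F j y)).card : ℝ)
        / (Fintype.card D : ℝ) ≤ lam :=
  random_coloring_union_bound_general M N hM lam hlam1 hNbound
end

section
/- Type II error decomposition: for the concatenated IDF code, the type II error probability W^m(D_ĩ | f_i) for ĩ ≠ i is at most |{y^n ∈ D* : F_i(y^n) = F_ĩ(y^n)}| · max_{y^n∈D*} W^n(y^n|x*^n) + δ₂, where δ₂ bounds the second-phase transmission error. -/
/-!
Split `Dstar` into collision points (`Fi y = Fj y`) and the rest. On a collision point the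
acceptance probability of the wrong identity is only bounded by `1`, so each such point costs at
most `max W1`; elsewhere the transmission code errs with probability at most `δ₂`, and the
first-phase weights of these points add up to at most `1`.
-/

open Finset

section WeightedSums

variable {ι R : Type*} [CommSemiring R] [PartialOrder R] [IsOrderedRing R]
  {s : Finset ι} {w g : ι → R}

theorem sum_mul_le_card_mul_of_le_one {M : R} (hw : ∀ i ∈ s, 0 ≤ w i)
    (hwM : ∀ i ∈ s, w i ≤ M) (hg : ∀ i ∈ s, g i ≤ 1) :
    ∑ i ∈ s, w i * g i ≤ #s * M :=
  (sum_le_card_nsmul s _ M fun i hi =>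
    (mul_le_of_le_one_right (hw i hi) (hg i hi)).trans (hwM i hi)).trans_eq (nsmul_eq_mul _ _)

theorem sum_mul_le_of_sum_le_one {δ : R} (hw : ∀ i ∈ s, 0 ≤ w i) (hw_sum : ∑ i ∈ s, w i ≤ 1)
    (hg : ∀ i ∈ s, g i ≤ δ) (hδ : 0 ≤ δ) :
    ∑ i ∈ s, w i * g i ≤ δ :=
  calc ∑ i ∈ s, w i * g i ≤ ∑ i ∈ s, w i * δ :=
        sum_le_sum fun i hi => mul_le_mul_of_nonneg_left (hg i hi) (hw i hi)
    _ = (∑ i ∈ s, w i) * δ := (sum_mul _ _ _).symm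
    _ ≤ δ := mul_le_of_le_one_left hδ hw_sum

end WeightedSums

theorem type_two_error_bound_general
    {Yn Zk L : Type*} [Fintype Yn] [Fintype Zk] [DecidableEq L]
    (W1 : Yn → ℝ)  -- first-phase output distribution given x*^n
    (hW1nn : ∀ y, 0 ≤ W1 y) (hW1sum : ∑ y, W1 y = 1)
    (Dstar : Finset Yn) (hDne : Dstar.Nonempty)
    (W2 : L → Zk → ℝ)  -- second-phase output distribution given codeword c(l)
    (hW2nn : ∀ l z, 0 ≤ W2 l z) (hW2sum : ∀ l, ∑ z, W2 l z = 1)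
    (D' : L → Finset Zk) (δ₂ : ℝ) (hδ₂ : 0 ≤ δ₂)
    (htrans : ∀ l l', l ≠ l' → ∑ z ∈ D' l', W2 l z ≤ δ₂)
    (Fi Fj : Yn → L)  -- coloring functions for identities i and ĩ
    :
    ∑ y ∈ Dstar, W1 y * ∑ z ∈ D' (Fj y), W2 (Fi y) z
      ≤ ((Dstar.filter (fun y => Fi y = Fj y)).card : ℝ)
          * (Dstar.sup' hDne W1) + δ₂ := by
  have hacc_le_one : ∀ y, ∑ z ∈ D' (Fj y), W2 (Fi y) z ≤ 1 := fun y =>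
    (sum_le_univ_sum_of_nonneg (hW2nn _)).trans_eq (hW2sum _)
  have hcollisions := sum_mul_le_card_mul_of_le_one
    (s := Dstar.filter fun y => Fi y = Fj y) (M := Dstar.sup' hDne W1) (fun y _ => hW1nn y)
    (fun y hy => le_sup' W1 (mem_filter.1 hy).1) (fun y _ => hacc_le_one y)
  have hrest := sum_mul_le_of_sum_le_one
    (s := Dstar.filter fun y => Fi y ≠ Fj y) (fun y _ => hW1nn y)
    ((sum_le_univ_sum_of_nonneg hW1nn).trans_eq hW1sum)
    (fun y hy => htrans _ _ (mem_filter.1 hy).2) hδ₂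
  rw [← sum_filter_add_sum_filter_not Dstar fun y => Fi y = Fj y]
  exact add_le_add hcollisions hrest

/-- Type II error decomposition for the concatenated IDF code: the probability
of accepting ĩ ≠ i is bounded by the number of collision points times the
maximal typical-sequence probability, plus the second-phase error δ₂. -/
theorem type_two_error_bound
    {Yn Zk L : Type*} [Fintype Yn] [Fintype Zk] [Fintype L] [DecidableEq L]
    (W1 : Yn → ℝ)  -- first-phase output distribution given x*^n
    (hW1nn : ∀ y, 0 ≤ W1 y) (hW1sum : ∑ y, W1 y = 1)
    (Dstar : Finset Yn) (hDne : Dstar.Nonempty)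
    (W2 : L → Zk → ℝ)  -- second-phase output distribution given codeword c(l)
    (hW2nn : ∀ l z, 0 ≤ W2 l z) (hW2sum : ∀ l, ∑ z, W2 l z = 1)
    (D' : L → Finset Zk) (δ₂ : ℝ) (hδ₂ : 0 ≤ δ₂)
    (htrans : ∀ l l', l ≠ l' → ∑ z ∈ D' l', W2 l z ≤ δ₂)
    (Fi Fj : Yn → L)  -- coloring functions for identities i and ĩ
    :
    ∑ y ∈ Dstar, W1 y * ∑ z ∈ D' (Fj y), W2 (Fi y) z
      ≤ ((Dstar.filter (fun y => Fi y = Fj y)).card : ℝ)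
          * (Dstar.sup' hDne W1) + δ₂ :=
  type_two_error_bound_general W1 hW1nn hW1sum Dstar hDne W2 hW2nn hW2sum D' δ₂ hδ₂ htrans Fi Fj
end
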